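/- Let E ⊂ ℝ^{n+1} be a closed n-dimensional ADR set, Q₀ ∈ 𝔻(E), and ℱ ⊂ 𝔻_{Q₀} a pairwise disjoint family. Then the local sawtooth Ω_{ℱ,Q₀} satisfies the interior Corkscrew condition: there is c ∈ (0,1), depending only on n, the ADR constant of E, and the Whitney-region parameters m₀, C₀, such that for every x ∈ ∂Ω_{ℱ,Q₀} and 0 < r ≲ ℓ(Q₀), there exists X with B(X, cr) ⊂ B(x,r) ∩ Ω_{ℱ,Q₀}. -/
import Mathlib


open MeasureTheory Metric Set
open scoped ENNReal
noncomputable section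

abbrev Euc (n : ℕ) := EuclideanSpace ℝ (Fin (n + 1))

/-- Closed axis-parallel cube of center `c` and side length `l`. -/
def Cb {n : ℕ} (c : Euc n) (l : ℝ) : Set (Euc n) := {y | ∀ i, |y i - c i| ≤ l / 2}

/-- Distance between two sets. -/
noncomputable def setDist {n : ℕ} (A B : Set (Euc n)) : ℝ :=
  (⨅ a ∈ A, EMetric.infEdist a B).toReal

/-- `E` is an `n`-dimensional Ahlfors–David regular (ADR) set with constant `C`. -/
def IsADR (n : ℕ) (C : ℝ) (E : Set (Euc n)) : Prop :=
  IsClosed E ∧ E.Nonempty ∧ 1 ≤ C ∧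
    ∀ x ∈ E, ∀ r : ℝ, 0 < r → r < Metric.diam E →
      ENNReal.ofReal (r ^ n / C) ≤ μH[(n : ℝ)] (E ∩ Metric.ball x r) ∧
        μH[(n : ℝ)] (E ∩ Metric.ball x r) ≤ ENNReal.ofReal (C * r ^ n)

/-- A Christ–David dyadic grid on `E`, with interior/exterior surface-ball constants
`a₀` and `C₁`. -/
structure DyadicGrid (n : ℕ) (E : Set (Euc n)) where
  idx : Type
  shape : idx → Set (Euc n)
  len : idx → ℝ
  center : idx → Euc n
  len_pos : ∀ Q, 0 < len Q
  len_dyadic : ∀ Q, ∃ k : ℤ, len Q = 2 ^ k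
  shape_sub : ∀ Q, shape Q ⊆ E
  center_mem : ∀ Q, center Q ∈ shape Q
  nested : ∀ Q Q', len Q ≤ len Q' → shape Q ⊆ shape Q' ∨ Disjoint (shape Q) (shape Q')
  disjt : ∀ Q Q', Q ≠ Q' → len Q = len Q' → Disjoint (shape Q) (shape Q')
  covers : ∀ k : ℤ, ∀ x ∈ E, ∃ Q, len Q = 2 ^ k ∧ x ∈ shape Q
  a₀ : ℝ
  a₀_pos : 0 < a₀
  C₁ : ℝ
  inner_ball : ∀ Q, E ∩ ball (center Q) (a₀ * len Q) ⊆ shape Q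
  outer_ball : ∀ Q, shape Q ⊆ ball (center Q) (C₁ * len Q)

/-- A Whitney decomposition of `ℝ^{n+1} \ E` into axis-parallel cubes satisfying
`4 diam I ≤ dist(4I, E) ≤ dist(I,E) ≤ 40 diam I`. -/
structure Whitney (n : ℕ) (E : Set (Euc n)) where
  idx : Type
  center : idx → Euc n
  len : idx → ℝ
  len_pos : ∀ I, 0 < len I
  covers : ∀ X : Euc n, X ∉ E → ∃ I, X ∈ Cb (center I) (len I)
  disjointInt : ∀ I J, I ≠ J →
    Disjoint (interior (Cb (center I) (len I))) (interior (Cb (center J) (len J)))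
  far : ∀ I, 4 * Metric.diam (Cb (center I) (len I)) ≤ setDist (Cb (center I) (4 * len I)) E
  near : ∀ I, setDist (Cb (center I) (len I)) E ≤ 40 * Metric.diam (Cb (center I) (len I))

variable {n : ℕ} {E : Set (Euc n)}

/-- The Whitney cubes associated to a dyadic cube `Q`:
`ℓ(Q)/2^{m₀} ≤ ℓ(I) ≤ 2^{m₀} ℓ(Q)` and `dist(I,Q) ≤ C₀ ℓ(Q)`. -/
def WQ (D : DyadicGrid n E) (W : Whitney n E) (m₀ : ℕ) (C₀ : ℝ) (Q : D.idx) : Set W.idx :=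
  {I | D.len Q / 2 ^ m₀ ≤ W.len I ∧ W.len I ≤ 2 ^ m₀ * D.len Q ∧
       setDist (Cb (W.center I) (W.len I)) (D.shape Q) ≤ C₀ * D.len Q}

/-- The (fattened) Whitney region `U_Q = ∪_{I ∈ 𝒲_Q} (1+τ) I`. -/
def UQ (D : DyadicGrid n E) (W : Whitney n E) (m₀ : ℕ) (C₀ τ : ℝ) (Q : D.idx) :
    Set (Euc n) :=
  ⋃ I ∈ WQ D W m₀ C₀ Q, Cb (W.center I) ((1 + τ) * W.len I)

/-- The Carleson box `T_Q = int (∪_{Q' ⊆ Q} U_{Q'})`. -/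
def CarlesonBox (D : DyadicGrid n E) (W : Whitney n E) (m₀ : ℕ) (C₀ τ : ℝ) (Q : D.idx) :
    Set (Euc n) :=
  interior (⋃ Q' ∈ {Q' | D.shape Q' ⊆ D.shape Q}, UQ D W m₀ C₀ τ Q')

/-- The discretized local sawtooth `𝔻_{ℱ,Q₀}`. -/
def DiscSawtooth (D : DyadicGrid n E) (F : Set D.idx) (Q₀ : D.idx) : Set D.idx :=
  {Q | D.shape Q ⊆ D.shape Q₀ ∧ ∀ Qj ∈ F, ¬ D.shape Q ⊆ D.shape Qj}

/-- The local sawtooth region `Ω_{ℱ,Q₀}`. -/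
def Sawtooth (D : DyadicGrid n E) (W : Whitney n E) (m₀ : ℕ) (C₀ τ : ℝ)
    (F : Set D.idx) (Q₀ : D.idx) : Set (Euc n) :=
  interior (⋃ Q ∈ DiscSawtooth D F Q₀, UQ D W m₀ C₀ τ Q)

/-- The global sawtooth region `Ω_ℱ`. -/
def GlobalSawtooth (D : DyadicGrid n E) (W : Whitney n E) (m₀ : ℕ) (C₀ τ : ℝ)
    (F : Set D.idx) : Set (Euc n) :=
  interior (⋃ Q ∈ {Q | ∀ Qj ∈ F, ¬ D.shape Q ⊆ D.shape Qj}, UQ D W m₀ C₀ τ Q)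

private lemma norm_le_sqrt_mul {n : ℕ} {v : Euc n} {M : ℝ} (hM : 0 ≤ M) (h : ∀ i, |v i| ≤ M) :
    ‖v‖ ≤ Real.sqrt (n+1) * M := by
  rw [EuclideanSpace.norm_eq]
  have h1 : ∑ i, ‖v i‖ ^ 2 ≤ (n+1) * M^2 := by
    calc ∑ i, ‖v i‖ ^2 ≤ ∑ _i : Fin (n+1), M^2 := Finset.sum_le_sum (fun i _ => by
          have := h i; rw [Real.norm_eq_abs]; nlinarith [abs_nonneg (v i)])
      _ = (n+1) * M^2 := by simp [Finset.sum_const]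
  calc Real.sqrt (∑ i, ‖v i‖ ^2) ≤ Real.sqrt ((n+1)*M^2) := Real.sqrt_le_sqrt h1
    _ = Real.sqrt (n+1) * M := by
        rw [Real.sqrt_mul (by positivity), Real.sqrt_sq hM]

private lemma abs_apply_le_norm {n : ℕ} (v : Euc n) (i : Fin (n+1)) : |v i| ≤ ‖v‖ := by
  rw [EuclideanSpace.norm_eq]
  calc |v i| = Real.sqrt (‖v i‖^2) := by
        rw [Real.norm_eq_abs, Real.sqrt_sq_eq_abs, abs_abs]
    _ ≤ Real.sqrt (∑ j, ‖v j‖^2) := Real.sqrt_le_sqrt (Finset.single_le_sum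
        (f := fun j => ‖v j‖^2) (fun j _ => by positivity) (Finset.mem_univ i))

private lemma abs_sub_apply_le_dist {n : ℕ} (z w : Euc n) (i : Fin (n+1)) :
    |z i - w i| ≤ dist z w := by
  rw [dist_eq_norm]
  exact abs_apply_le_norm (z - w) i

private lemma dist_le_sqrt_mul {n : ℕ} {z w : Euc n} {M : ℝ} (hM : 0 ≤ M)
    (h : ∀ i, |z i - w i| ≤ M) : dist z w ≤ Real.sqrt (n+1) * M := by
  rw [dist_eq_norm]
  exact norm_le_sqrt_mul hM h

private lemma exists_dist_lt {n : ℕ} {A B : Set (Euc n)} {M η : ℝ} (hA : A.Nonempty)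
    (hB : B.Nonempty) (h : setDist A B ≤ M) (hη : 0 < η) :
    ∃ a ∈ A, ∃ b ∈ B, dist a b < M + η := by
  obtain ⟨a₀, ha₀⟩ := hA
  obtain ⟨b₀, hb₀⟩ := hB
  have hne : (⨅ a ∈ A, EMetric.infEdist a B) ≠ ⊤ := by
    refine ne_top_of_le_ne_top ?_ (iInf₂_le a₀ ha₀)
    exact ne_top_of_le_ne_top (edist_ne_top a₀ b₀) (EMetric.infEdist_le_edist_of_mem hb₀)
  have hlt : (⨅ a ∈ A, EMetric.infEdist a B) < ENNReal.ofReal (M+η) := by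
    rw [ENNReal.lt_ofReal_iff_toReal_lt hne]
    exact lt_of_le_of_lt h (by linarith)
  simp only [iInf_lt_iff] at hlt
  obtain ⟨a, ha, hlt⟩ := hlt
  obtain ⟨b, hb, hlt⟩ := EMetric.infEdist_lt_iff.mp hlt
  exact ⟨a, ha, b, hb, (edist_lt_ofReal).mp hlt⟩

private lemma Cb_nonempty {n : ℕ} (c : Euc n) {l : ℝ} (hl : 0 ≤ l) : (Cb c l).Nonempty :=
  ⟨c, fun i => by rw [sub_self, abs_zero]; positivity⟩

private lemma arith_sum {N P L τ C₀ C₁ K lI lIs lQ : ℝ}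
    (hN : 1 ≤ N) (hP : 0 < P) (hL : 0 < L) (hτ0 : 0 < τ) (hτ : τ < 1/2)
    (hlI : 0 < lI) (hlIP : lI ≤ P*L) (hlIs : 0 < lIs) (hlIsP : lIs ≤ P*L)
    (hlQ : 0 < lQ) (hlQL : lQ ≤ L) (hC₀ : 0 < C₀)
    (hK : 3*N*P + 2*C₀ + 2*C₁ ≤ K) :
    N*((2+τ)*lI/2) + N*(lIs/2) + C₀*lQ + C₀*L + 2*(C₁*L) ≤ K*L := by
  have hN0 : (0:ℝ) ≤ N := by linarith
  have e1 : N*lI ≤ N*(P*L) := mul_le_mul_of_nonneg_left hlIP hN0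
  have e2 : N*lIs ≤ N*(P*L) := mul_le_mul_of_nonneg_left hlIsP hN0
  have e3 : C₀*lQ ≤ C₀*L := mul_le_mul_of_nonneg_left hlQL hC₀.le
  have e4 : (3*N*P + 2*C₀ + 2*C₁)*L ≤ K*L := mul_le_mul_of_nonneg_right hK hL.le
  have e5a : τ*(N*lI) ≤ τ*(N*(P*L)) := mul_le_mul_of_nonneg_left e1 hτ0.le
  have e5b : τ*(N*(P*L)) ≤ (1/2)*(N*(P*L)) := by
    have : (0:ℝ) ≤ N*(P*L) := by positivity
    nlinarith
  have e5 : τ*(N*lI) ≤ (1/2)*(N*(P*L)) := le_trans e5a e5b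
  nlinarith [mul_pos hP hL]

set_option maxHeartbeats 1000000 in
/-- Interior Corkscrew condition for the local sawtooth `Ω_{ℱ,Q₀}`: there is `c ∈ (0,1)`,
depending only on `n`, the ADR constant and the Whitney-region parameters, such that for every
`x ∈ ∂Ω_{ℱ,Q₀}` and `0 < r ≤ ℓ(Q₀)` there is `X` with `B(X,cr) ⊆ B(x,r) ∩ Ω_{ℱ,Q₀}`. -/
theorem statement14 (n : ℕ) (CA : ℝ) (m₀ : ℕ) (C₀ τ a₀ C₁ : ℝ)
    (hC₀ : 0 < C₀) (hτ : 0 < τ) (hτ' : τ < 1 / 2) :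
    ∃ c : ℝ, 0 < c ∧ c < 1 ∧
      ∀ (E : Set (Euc n)), IsADR n CA E →
        ∀ (D : DyadicGrid n E) (W : Whitney n E), D.a₀ = a₀ → D.C₁ = C₁ →
          (∀ Q : D.idx, (WQ D W m₀ C₀ Q).Nonempty) →
          ∀ (Q₀ : D.idx) (F : Set D.idx),
            (∀ Qj ∈ F, D.shape Qj ⊆ D.shape Q₀) →
            (∀ Qi ∈ F, ∀ Qj ∈ F, Qi ≠ Qj → Disjoint (D.shape Qi) (D.shape Qj)) →
            ∀ x ∈ frontier (Sawtooth D W m₀ C₀ τ F Q₀), ∀ r : ℝ, 0 < r → r ≤ D.len Q₀ →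
              ∃ X : Euc n,
                Metric.ball X (c * r) ⊆ Metric.ball x r ∩ Sawtooth D W m₀ C₀ τ F Q₀ := by
  classical
  have hN1 : (1:ℝ) ≤ Real.sqrt (n+1) := by
    rw [show (1:ℝ) = Real.sqrt 1 by simp]
    exact Real.sqrt_le_sqrt (by norm_num)
  set N : ℝ := Real.sqrt (n+1) with hN
  have hN0 : (0:ℝ) < N := lt_of_lt_of_le one_pos hN1
  set K : ℝ := max (3*N*2^m₀ + 2*C₀ + 2*C₁) 1 with hKdef
  have hK1 : (1:ℝ) ≤ K := le_max_right _ _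
  have hK0 : (0:ℝ) < K := lt_of_lt_of_le one_pos hK1
  have hKge : 3*N*2^m₀ + 2*C₀ + 2*C₁ ≤ K := le_max_left _ _
  set δ : ℝ := 1/(4*K) with hδdef
  have hδ0 : (0:ℝ) < δ := by positivity
  have hδK : K * δ = 1/4 := by rw [hδdef]; field_simp
  have hδ4 : δ ≤ 1/4 := by
    rw [hδdef]
    exact one_div_le_one_div_of_le (by norm_num) (by linarith only [hK1])
  set c : ℝ := min (δ/2^(m₀+2)) (1/(8*N)) with hcdef
  have hc1 : c ≤ δ/2^(m₀+2) := min_le_left _ _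
  have hc2 : c ≤ 1/(8*N) := min_le_right _ _
  have hc0 : 0 < c := lt_min (by positivity) (by positivity)
  refine ⟨c, hc0, ?_, ?_⟩
  · refine lt_of_le_of_lt hc2 ?_
    rw [div_lt_one (by positivity)]; linarith only [hN1]
  intro E hADR D W ha hC1eq hWne Q₀ F hF1 hF2 x hx r hr hrQ
  have hcr8 : c * r ≤ r / 8 := by
    have h1 : c * r ≤ (1/(8*N)) * r := mul_le_mul_of_nonneg_right hc2 hr.le
    have h2 : (1/(8*N)) * r ≤ r/8 := by
      rw [div_mul_eq_mul_div, one_mul, div_le_div_iff₀ (by positivity) (by norm_num)]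
      nlinarith only [mul_nonneg hr.le (by linarith only [hN1] : (0:ℝ) ≤ N - 1)]
    linarith only [h1, h2]
  -- find a point y of the sawtooth close to x
  obtain ⟨y, hyS, hxy⟩ := Metric.mem_closure_iff.mp (frontier_subset_closure hx) (r/8)
    (by linarith only [hr])
  have hyU : y ∈ ⋃ Q ∈ DiscSawtooth D F Q₀, UQ D W m₀ C₀ τ Q := interior_subset hyS
  obtain ⟨Q, hQsaw, hyQ⟩ := mem_iUnion₂.mp hyU
  simp only [UQ] at hyQ
  obtain ⟨I, hIW, hyI⟩ := mem_iUnion₂.mp hyQ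
  simp only [DiscSawtooth, mem_setOf_eq] at hQsaw
  simp only [WQ, mem_setOf_eq] at hIW
  obtain ⟨hI1, hI2, hI3⟩ := hIW
  have hlQ : 0 < D.len Q := D.len_pos Q
  have hlI : 0 < W.len I := W.len_pos I
  have hP0 : (0:ℝ) < 2^m₀ := by positivity
  -- a generic way to conclude
  have key : ∀ (Q' : D.idx) (I' : W.idx), Q' ∈ DiscSawtooth D F Q₀ →
      I' ∈ WQ D W m₀ C₀ Q' → ∀ X : Euc n,
      dist x X < r/2 → (∀ z ∈ ball X (c*r), ∀ i, |z i - W.center I' i| ≤ (1+τ) * W.len I' / 2) →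
      ball X (c*r) ⊆ ball x r ∩ Sawtooth D W m₀ C₀ τ F Q₀ := by
    intro Q' I' hQ' hI' X hdX hcube
    intro z hz
    have hzX : dist z X < c*r := mem_ball.mp hz
    constructor
    · rw [mem_ball]
      calc dist z x ≤ dist z X + dist X x := dist_triangle _ _ _
        _ < c*r + r/2 := by rw [dist_comm X x]; linarith only [hzX, hdX]
        _ ≤ r := by linarith only [hcr8, hr]
    · have hball : ball X (c*r) ⊆ ⋃ Q ∈ DiscSawtooth D F Q₀, UQ D W m₀ C₀ τ Q := by
        intro w hw
        refine mem_iUnion₂.mpr ⟨Q', hQ', ?_⟩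
        simp only [UQ]
        exact mem_iUnion₂.mpr ⟨I', hI', fun i => hcube w hw i⟩
      exact interior_maximal hball isOpen_ball hz
  by_cases hcase : D.len Q ≤ δ * r
  · -- small cube: pass to an ancestor of side comparable to δ r
    obtain ⟨j, hj⟩ := D.len_dyadic Q
    set k : ℤ := Int.log 2 (δ*r) with hk
    have hk1 : (2:ℝ)^k ≤ δ*r := Int.zpow_log_le_self (by norm_num) (by positivity)
    have hk2 : δ*r < (2:ℝ)^(k+1) := Int.lt_zpow_succ_log_self (by norm_num) _
    have hL0 : (0:ℝ) < 2^k := by positivity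
    have hjk : (2:ℝ)^j ≤ (2:ℝ)^k := by
      have h1 : (2:ℝ)^j < (2:ℝ)^(k+1) := lt_of_le_of_lt (hj ▸ hcase) hk2
      have h2 : j < k+1 := (zpow_lt_zpow_iff_right₀ (by norm_num : (1:ℝ) < 2)).mp h1
      exact zpow_le_zpow_right₀ (by norm_num) (by omega)
    obtain ⟨Qs, hQslen, hQsc⟩ := D.covers k (D.center Q) (D.shape_sub Q (D.center_mem Q))
    have hQQs : D.shape Q ⊆ D.shape Qs := by
      rcases D.nested Q Qs (by rw [hj, hQslen]; exact hjk) with h|h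
      · exact h
      · exact absurd hQsc (disjoint_left.mp h (D.center_mem Q))
    have hQsQ₀ : D.shape Qs ⊆ D.shape Q₀ := by
      have hlen : D.len Qs ≤ D.len Q₀ := by
        rw [hQslen]
        calc (2:ℝ)^k ≤ δ*r := hk1
          _ ≤ (1/4)*r := mul_le_mul_of_nonneg_right hδ4 hr.le
          _ ≤ D.len Q₀ := by linarith only [hrQ, hr]
      rcases D.nested Qs Q₀ hlen with h|h
      · exact h
      · exact absurd (hQsaw.1 (D.center_mem Q)) (disjoint_left.mp h hQsc)
    have hQssaw : Qs ∈ DiscSawtooth D F Q₀ :=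
      ⟨hQsQ₀, fun Qj hQj hsub => hQsaw.2 Qj hQj (hQQs.trans hsub)⟩
    obtain ⟨Is, hIs⟩ := hWne Qs
    have hIsW := hIs
    simp only [WQ, mem_setOf_eq] at hIs
    obtain ⟨hIs1, hIs2, hIs3⟩ := hIs
    have hlIs : 0 < W.len Is := W.len_pos Is
    -- distances
    obtain ⟨a, haI, q, hq, haq⟩ := exists_dist_lt (Cb_nonempty _ hlI.le)
      ⟨_, D.center_mem Q⟩ hI3 (show (0:ℝ) < r/16 by linarith only [hr])
    obtain ⟨as, hasI, qs, hqs, hasqs⟩ := exists_dist_lt (Cb_nonempty _ hlIs.le)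
      ⟨_, D.center_mem Qs⟩ hIs3 (show (0:ℝ) < r/16 by linarith only [hr])
    have hya : dist y a ≤ N * ((2+τ) * W.len I / 2) := by
      refine dist_le_sqrt_mul (by positivity) (fun i => ?_)
      have h1 := hyI i
      have h2 := haI i
      calc |y i - a i| ≤ |y i - W.center I i| + |W.center I i - a i| := by
            have := abs_sub_le (y i) (W.center I i) (a i); linarith only [this]
        _ ≤ (1+τ) * W.len I / 2 + W.len I / 2 := by
            rw [abs_sub_comm (W.center I i) (a i)]; linarith only [h1, h2]
        _ ≤ (2+τ) * W.len I / 2 := le_of_eq (by ring)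
    have hqc : dist q (D.center Qs) ≤ C₁ * 2^k := by
      have := D.outer_ball Qs (hQQs hq)
      rw [mem_ball, hQslen, hC1eq] at this
      exact this.le
    have hqsc : dist (D.center Qs) qs ≤ C₁ * 2^k := by
      have := D.outer_ball Qs hqs
      rw [mem_ball, hQslen, hC1eq] at this
      rw [dist_comm]; exact this.le
    have hasX : dist as (W.center Is) ≤ N * (W.len Is / 2) := by
      refine dist_le_sqrt_mul (by positivity) (fun i => ?_)
      exact hasI i
    set X := W.center Is with hX
    have htri : dist x X ≤ dist x y + dist y a + dist a q + dist q (D.center Qs)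
        + dist (D.center Qs) qs + dist qs as + dist as X := by
      have d1 := dist_triangle x y X
      have d2 := dist_triangle y a X
      have d3 := dist_triangle a q X
      have d4 := dist_triangle q (D.center Qs) X
      have d5 := dist_triangle (D.center Qs) qs X
      have d6 := dist_triangle qs as X
      linarith only [d1, d2, d3, d4, d5, d6]
    have hlQk : D.len Q ≤ 2^k := by rw [hj]; exact hjk
    have hlIk : W.len I ≤ 2^m₀ * 2^k := le_trans hI2 (mul_le_mul_of_nonneg_left hlQk hP0.le)
    have hlIsk : W.len Is ≤ 2^m₀ * 2^k := by rw [hQslen] at hIs2; exact hIs2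
    have hKL : K * 2^k ≤ r/4 := by
      have h1 : K * (2:ℝ)^k ≤ K * (δ*r) := mul_le_mul_of_nonneg_left hk1 hK0.le
      have h2 : K * (δ*r) = (1/4)*r := by rw [← mul_assoc, hδK]
      linarith only [h1, h2]
    have hsum : N * ((2+τ) * W.len I / 2) + N * (W.len Is / 2) + C₀ * D.len Q
        + C₀ * D.len Qs + 2 * (C₁ * 2^k) ≤ K * 2^k := by
      rw [hQslen]
      exact arith_sum hN1 hP0 hL0 hτ hτ' hlI hlIk hlIs hlIsk hlQ hlQk hC₀ hKge
    have hdxX : dist x X < r/2 := by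
      have hqs' : dist qs as < C₀ * D.len Qs + r/16 := by rw [dist_comm]; exact hasqs
      linarith only [htri, hxy, hya, haq, hqc, hqsc, hqs', hasX, hsum, hKL]
    refine ⟨X, key Qs Is hQssaw hIsW X hdxX ?_⟩
    intro z hz i
    have h1 : |z i - X i| ≤ dist z X := abs_sub_apply_le_dist z X i
    have h2 : dist z X < c * r := mem_ball.mp hz
    have hcr : c * r < W.len Is / 2 := by
      have h3 : c * r ≤ (δ/2^(m₀+2)) * r := mul_le_mul_of_nonneg_right hc1 hr.le
      have h4 : (δ/2^(m₀+2)) * r < W.len Is / 2 := by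
        have h5 : (2:ℝ)^k / 2^m₀ ≤ W.len Is := by rw [hQslen] at hIs1; exact hIs1
        have h6 : δ * r < 2 * 2^k := by
          have : ((2:ℝ))^(k+1) = 2 * 2^k := by rw [zpow_add₀ (by norm_num : (2:ℝ) ≠ 0)]; ring
          linarith [hk2, this.symm.le]
        have h7 : ((2:ℝ))^(m₀+2) = 2^m₀ * 4 := by rw [pow_add]; norm_num
        calc (δ/2^(m₀+2)) * r = δ*r/(2^m₀*4) := by rw [h7]; ring
          _ < (2*2^k)/(2^m₀*4) := (div_lt_div_iff_of_pos_right (by positivity)).mpr h6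
          _ = ((2:ℝ)^k/2^m₀)/2 := by ring
          _ ≤ W.len Is / 2 := by linarith only [h5]
      linarith only [h3, h4]
    refine le_of_lt ?_
    calc |z i - X i| < c * r := lt_of_le_of_lt h1 h2
      _ ≤ W.len Is / 2 := hcr.le
      _ ≤ (1+τ) * W.len Is / 2 := by nlinarith only [mul_nonneg hτ.le hlIs.le]
  · -- big cube: move y towards the center of its Whitney cube
    push_neg at hcase
    set ℓ : ℝ := W.len I with hℓ
    set cI := W.center I with hcI
    set s : ℝ := (1+τ)*ℓ/2 with hs
    have hs0 : 0 < s := by positivity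
    have hℓδ : δ * r / 2^m₀ < ℓ := by
      rw [div_lt_iff₀ hP0]
      calc δ * r < D.len Q := hcase
        _ ≤ ℓ * 2^m₀ := (div_le_iff₀ hP0).mp hI1
    set t : ℝ := min 1 (r/(8*(s*N))) with ht
    have ht0 : 0 < t := lt_min one_pos (by positivity)
    have ht1 : t ≤ 1 := min_le_left _ _
    set X : Euc n := cI + (1-t) • (y - cI) with hX
    have hXi : ∀ i, X i - cI i = (1-t)*(y i - cI i) := by
      intro i
      show cI i + (1-t)*(y i - cI i) - cI i = _
      ring
    have hyis : ∀ i, |y i - cI i| ≤ s := by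
      intro i
      have := hyI i
      rw [hs]; linarith only [hyI i]
    have hXc : ∀ i, |X i - cI i| ≤ (1-t)*s := by
      intro i
      rw [hXi i, abs_mul, abs_of_nonneg (by linarith only [ht1] : (0:ℝ) ≤ 1-t)]
      exact mul_le_mul_of_nonneg_left (hyis i) (by linarith only [ht1])
    have hyX : y - X = t • (y - cI) := by
      rw [hX]
      module
    have hdyX : dist y X ≤ t * (s * N) := by
      rw [dist_eq_norm, hyX, norm_smul, Real.norm_of_nonneg ht0.le]
      have h1 : ‖y - cI‖ ≤ N * s := norm_le_sqrt_mul hs0.le (fun i => hyis i)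
      calc t * ‖y - cI‖ ≤ t * (N * s) := mul_le_mul_of_nonneg_left h1 ht0.le
        _ = t * (s * N) := by ring
    have hts : t * (s * N) ≤ r/8 := by
      have h1 : t ≤ r/(8*(s*N)) := min_le_right _ _
      have h2 : t * (s*N) ≤ (r/(8*(s*N))) * (s*N) :=
        mul_le_mul_of_nonneg_right h1 (by positivity)
      have h3 : (r/(8*(s*N))) * (s*N) = r/8 := by field_simp
      linarith only [h2, h3]
    have hdxX : dist x X < r/2 := by
      calc dist x X ≤ dist x y + dist y X := dist_triangle _ _ _
        _ < r/8 + r/8 := by linarith only [hxy, hdyX, hts]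
        _ ≤ r/2 := by linarith only [hr]
    have hcrts : c * r ≤ t * s := by
      rcases min_cases 1 (r/(8*(s*N))) with ⟨h1, h2⟩|⟨h1, h2⟩
      · -- t = 1
        rw [ht, h1, one_mul]
        have h3 : c * r ≤ (δ/2^(m₀+2)) * r := mul_le_mul_of_nonneg_right hc1 hr.le
        have h4 : (δ/2^(m₀+2)) * r ≤ s := by
          have h5 : δ * r / 2^m₀ < ℓ := hℓδ
          have h7 : ((2:ℝ))^(m₀+2) = 2^m₀ * 4 := by rw [pow_add]; norm_num
          rw [hs, div_mul_eq_mul_div, h7]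
          rw [div_le_iff₀ (by positivity : (0:ℝ) < 2^m₀*4)]
          rw [div_lt_iff₀ hP0] at h5
          nlinarith only [h5, mul_pos hlI hP0, mul_nonneg hτ.le (mul_pos hlI hP0).le]
        linarith only [h3, h4]
      · -- t = r/(8*(s*N))
        have h3 : (r/(8*(s*N))) * s = r/(8*N) := by field_simp
        rw [ht, h1, h3]
        calc c * r ≤ (1/(8*N)) * r := mul_le_mul_of_nonneg_right hc2 hr.le
          _ = r/(8*N) := by ring
    refine ⟨X, key Q I hQsaw ⟨hI1, hI2, hI3⟩ X hdxX ?_⟩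
    intro z hz i
    have h1 : |z i - X i| ≤ dist z X := abs_sub_apply_le_dist z X i
    have h2 : dist z X < c * r := mem_ball.mp hz
    calc |z i - cI i| ≤ |z i - X i| + |X i - cI i| := by
          have := abs_sub_le (z i) (X i) (cI i); linarith only [this]
      _ ≤ c * r + (1-t)*s := by linarith only [h1, h2, hXc i]
      _ ≤ t * s + (1-t)*s := by linarith only [hcrts]
      _ = s := by ring
      _ = (1+τ) * W.len I / 2 := by rw [hs]
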